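/- Let X be a compact metric space, f : X → X a transitive homeomorphism, and x, y ∈ X points such that the forward orbit of x and the backward orbit of y are dense and O(x) ∩ O(y) = ∅. Fix z with dense forward and backward orbits and O(z) disjoint from O(x) ∪ O(y), and h, k ∈ ℕ₀. Then for every n there exist natural numbers k_n, h_n (strictly increasing in n) with d(f^{h+1}(x), f^{-k_n}(z)) < 1/n and d(f^{h_n+1}(z), f^{-k}(y)) < 1/n, and the resulting sequences of chains x, f(x), …, f^h(x), f^{-k_n}(z), …, z, …, f^{h_n}(z), f^{-k}(y), …, y are acyclic 1/n-chains from x to y with nested supports whose union (minus {x,y}) is {f(x),…,f^h(x)} ∪ O(z) ∪ {f^{-k}(y),…,f^{-1}(y)}. -/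

import Mathlib

/-- `C 0, C 1, …, C m` is an ε-chain for `f` from `x` to `y`. -/
def IsEpsChain {X : Type*} [MetricSpace X] (f : X → X) (ε : ℝ) (C : ℕ → X) (m : ℕ)
    (x y : X) : Prop :=
  1 ≤ m ∧ C 0 = x ∧ C m = y ∧ ∀ i < m, dist (f (C i)) (C (i + 1)) < ε

/-- The chain `C 0, …, C m` contains a cyclic sub-chain. -/
def HasCyclicSubchain {X : Type*} (C : ℕ → X) (m : ℕ) : Prop :=
  (∃ i j, 1 ≤ i ∧ i < m ∧ 1 ≤ j ∧ j < m ∧ i ≠ j ∧ C i = C j) ∨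
  (∃ i, 1 ≤ i ∧ i < m ∧ (C i = C 0 ∨ C i = C m))

/-- The support (set of points) of the chain `C 0, …, C m`. -/
def chainSupport {X : Type*} (C : ℕ → X) (m : ℕ) : Set X := {p | ∃ i ≤ m, C i = p}

/-- The two-sided orbit `O(x) = {f^k(x) : k ∈ ℤ}`. -/
def orbitZ {X : Type*} (F : Equiv.Perm X) (x : X) : Set X := {y | ∃ k : ℤ, (F ^ k) x = y}

/-! Two disjoint dense orbits leave `X` without isolated points. Hence a dense orbit is never
periodic, and a dense sequence comes arbitrarily close to any point at arbitrarily late times.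
The latter gives strictly increasing `kₙ`, `hₙ` making the jumps from the `x`-segment to the
`z`-segment and from there to the `y`-segment shorter than `1/n`; the former, with the
disjointness of the three orbits, makes every chain injective, hence acyclic. Since
`kₙ, hₙ → ∞`, the `z`-segments `f^{-kₙ}(z), …, f^{hₙ}(z)` exhaust `O(z)`. -/

open Filter Topology Set Function

lemma Equiv.Perm.apply_zpow_apply {X : Type*} (g : Equiv.Perm X) (n : ℤ) (w : X) :
    g ((g ^ n) w) = (g ^ (n + 1)) w := by
  rw [← Equiv.Perm.mul_apply, ← zpow_one_add, add_comm]

lemma injective_zpow_apply_of_disjoint_orbitZ {X ι : Type*} {g : Equiv.Perm X} {w : ι → X}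
    (hw : ∀ i, Injective fun n : ℤ => (g ^ n) (w i))
    (hdisj : Pairwise fun i j => Disjoint (orbitZ g (w i)) (orbitZ g (w j))) :
    Injective fun p : ι × ℤ => (g ^ p.2) (w p.1) := by
  rintro ⟨i, m⟩ ⟨j, n⟩ (hmn : (g ^ m) (w i) = (g ^ n) (w j))
  obtain rfl | hij := eq_or_ne i j
  · rw [hw i hmn]
  · exact absurd hmn ((hdisj hij).ne_of_mem ⟨m, rfl⟩ ⟨n, rfl⟩)

lemma not_hasCyclicSubchain_of_injOn {X : Type*} {C : ℕ → X} {m : ℕ}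
    (hC : InjOn C (Iic m)) : ¬ HasCyclicSubchain C m := by
  rintro (⟨i, j, -, hi, -, hj, hne, hij⟩ | ⟨i, hi₀, hi, hi' | hi'⟩)
  · exact hne (hC (mem_Iic.2 hi.le) (mem_Iic.2 hj.le) hij)
  · have := hC (mem_Iic.2 hi.le) (mem_Iic.2 (Nat.zero_le m)) hi'; omega
  · have := hC (mem_Iic.2 hi.le) (mem_Iic.2 le_rfl) hi'; omega

section Topology
variable {X : Type*} [TopologicalSpace X]

lemma nhdsNE_neBot_of_dense_of_disjoint {s t : Set X} (hs : Dense s) (ht : Dense t)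
    (hst : Disjoint s t) (p : X) : (𝓝[≠] p).NeBot := by
  rw [neBot_iff, Ne, ← isOpen_singleton_iff_punctured_nhds]
  intro hp
  obtain ⟨q, hqs, rfl⟩ := hs.exists_mem_open hp (singleton_nonempty p)
  obtain ⟨r, hrt, rfl⟩ := ht.exists_mem_open hp (singleton_nonempty _)
  exact hst.ne_of_mem hqs hrt rfl

variable [T1Space X] [∀ p : X, (𝓝[≠] p).NeBot]

lemma injective_zpow_apply_of_dense_orbitZ {g : Equiv.Perm X} {w : X}
    (hw : Dense (orbitZ g w)) : Injective fun n : ℤ => (g ^ n) w := by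
  intro a b (hab : (g ^ a) w = (g ^ b) w)
  by_contra hne
  have hper : Periodic (fun n : ℤ => (g ^ n) w) (a - b) := fun n => calc
    (g ^ (n + (a - b))) w = (g ^ (n - b)) ((g ^ a) w) := by
      rw [← Equiv.Perm.mul_apply, ← zpow_add]; ring_nf
    _ = (g ^ n) w := by
      rw [hab, ← Equiv.Perm.mul_apply, ← zpow_add, sub_add_cancel]
  have hfin : (orbitZ g w).Finite := by
    change (range fun n : ℤ => (g ^ n) w).Finite
    rw [← hper.image_uIcc (sub_ne_zero.2 hne) 0]
    exact (toFinite _).image _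
  have huniv : orbitZ g w = univ := by rw [← hfin.isClosed.closure_eq, hw.closure_eq]
  exact infinite_of_mem_nhds w univ_mem (huniv ▸ hfin)

lemma DenseRange.frequently_mem {u : ℕ → X} (hu : DenseRange u) {U : Set X} (hU : IsOpen U)
    (hne : U.Nonempty) : ∃ᶠ i in atTop, u i ∈ U := by
  refine frequently_atTop.2 fun N => ?_
  obtain ⟨_, hpU, ⟨i, rfl⟩, hiN⟩ :=
    (hu.sdiff_finite ((finite_Iio N).image u)).inter_open_nonempty U hU hne
  exact ⟨i, not_lt.1 fun hi => hiN ⟨i, hi, rfl⟩, hpU⟩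

lemma injective_zpow_apply_fin_three {g : Equiv.Perm X} {x z y : X} (hx : Dense (orbitZ g x))
    (hz : Dense (orbitZ g z)) (hy : Dense (orbitZ g y)) (hxy : Disjoint (orbitZ g x) (orbitZ g y))
    (hzx : Disjoint (orbitZ g z) (orbitZ g x)) (hzy : Disjoint (orbitZ g z) (orbitZ g y)) :
    Injective fun q : Fin 3 × ℤ => (g ^ q.2) (![x, z, y] q.1) := by
  refine injective_zpow_apply_of_disjoint_orbitZ (fun i => ?_) fun i j hij => ?_
  · fin_cases i <;> apply injective_zpow_apply_of_dense_orbitZ <;> assumption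
  · fin_cases i <;> fin_cases j <;> simp_all [Disjoint.symm]

end Topology

lemma DenseRange.exists_strictMono_dist_lt {X : Type*} [MetricSpace X]
    [∀ p : X, (𝓝[≠] p).NeBot] {u : ℕ → X} (hu : DenseRange u) (t : X) :
    ∃ φ : ℕ → ℕ, StrictMono φ ∧ ∀ n : ℕ, 1 ≤ n → dist (u (φ n)) t < 1 / (n : ℝ) := by
  refine extraction_forall_of_frequently (P := fun n i => 1 ≤ n → dist (u i) t < 1 / (n : ℝ))
    fun n => ?_
  rcases Nat.eq_zero_or_pos n with rfl | hn
  · exact Frequently.of_forall fun _ h => absurd h (by omega)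
  · have hball := hu.frequently_mem Metric.isOpen_ball
      ⟨t, Metric.mem_ball_self (by positivity : (0 : ℝ) < 1 / n)⟩
    exact hball.mono fun _ hi _ => hi

section OrbitChain
variable {X : Type*} (g : Equiv.Perm X) (x z y : X) (h a b k : ℕ)

def orbitChain (i : ℕ) : X :=
  if i ≤ h then (g ^ (i : ℤ)) x
  else if i ≤ h + 1 + a + b then (g ^ ((i : ℤ) - (h : ℤ) - 1 - (a : ℤ))) z
  else (g ^ ((i : ℤ) - ((h + a + b + k + 2 : ℕ) : ℤ))) y

def orbitChainCoord (i : ℕ) : Fin 3 × ℤ :=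
  if i ≤ h then (0, i)
  else if i ≤ h + 1 + a + b then (1, (i : ℤ) - h - 1 - a)
  else (2, (i : ℤ) - (h + a + b + k + 2 : ℕ))

variable {g x z y h a b k}

lemma orbitChain_eq_zpow_coord (i : ℕ) : orbitChain g x z y h a b k i =
    (g ^ (orbitChainCoord h a b k i).2) (![x, z, y] (orbitChainCoord h a b k i).1) := by
  unfold orbitChain orbitChainCoord
  split_ifs <;> rfl

lemma orbitChainCoord_injOn : InjOn (orbitChainCoord h a b k) (Iic (h + a + b + k + 2)) := by
  intro i hi j hj hij
  simp only [mem_Iic] at hi hj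
  simp only [orbitChainCoord] at hij
  split_ifs at hij <;> simp only [Prod.mk.injEq] at hij <;> omega

lemma orbitChain_of_le {i : ℕ} (hi : i ≤ h) : orbitChain g x z y h a b k i = (g ^ (i : ℤ)) x :=
  if_pos hi

lemma orbitChain_of_lt_of_le {i : ℕ} (hi₁ : h < i) (hi₂ : i ≤ h + 1 + a + b) :
    orbitChain g x z y h a b k i = (g ^ ((i : ℤ) - h - 1 - a)) z := by
  rw [orbitChain, if_neg (by omega), if_pos hi₂]

lemma orbitChain_of_lt {i : ℕ} (hi : h + 1 + a + b < i) :
    orbitChain g x z y h a b k i = (g ^ ((i : ℤ) - (h + a + b + k + 2 : ℕ))) y := by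
  rw [orbitChain, if_neg (by omega), if_neg (by omega)]

lemma orbitChain_succ {i : ℕ} (hi₁ : i ≠ h) (hi₂ : i ≠ h + 1 + a + b) :
    g (orbitChain g x z y h a b k i) = orbitChain g x z y h a b k (i + 1) := by
  unfold orbitChain
  split_ifs <;> first | omega | (rw [Equiv.Perm.apply_zpow_apply]; push_cast; ring_nf)

lemma isEpsChain_orbitChain [MetricSpace X] {ε : ℝ} (hε : 0 < ε)
    (hxz : dist ((g ^ ((h : ℤ) + 1)) x) ((g ^ (-(a : ℤ))) z) < ε)
    (hzy : dist ((g ^ ((b : ℤ) + 1)) z) ((g ^ (-(k : ℤ))) y) < ε) :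
    IsEpsChain g ε (orbitChain g x z y h a b k) (h + a + b + k + 2) x y := by
  refine ⟨by omega, by simp [orbitChain_of_le], ?_, fun i hi => ?_⟩
  · rw [orbitChain_of_lt (by omega), sub_self, zpow_zero, Equiv.Perm.one_apply]
  by_cases hih : i = h
  · subst hih
    rw [orbitChain_of_le le_rfl, orbitChain_of_lt_of_le (by omega) (by omega),
      Equiv.Perm.apply_zpow_apply]
    convert hxz using 4
    push_cast; ring
  by_cases hib : i = h + 1 + a + b
  · subst hib
    rw [orbitChain_of_lt_of_le (by omega) le_rfl, orbitChain_of_lt (by omega),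
      Equiv.Perm.apply_zpow_apply]
    convert hzy using 4 <;> push_cast <;> ring
  rw [orbitChain_succ hih hib, dist_self]
  exact hε

lemma mem_chainSupport_orbitChain {p : X} :
    p ∈ chainSupport (orbitChain g x z y h a b k) (h + a + b + k + 2) ↔
      (∃ i : ℕ, i ≤ h ∧ (g ^ (i : ℤ)) x = p) ∨
      (∃ c : ℤ, -(a : ℤ) ≤ c ∧ c ≤ b ∧ (g ^ c) z = p) ∨
      (∃ j : ℕ, j ≤ k ∧ (g ^ (-(j : ℤ))) y = p) := by
  constructor
  · rintro ⟨i, hi, rfl⟩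
    rcases le_or_gt i h with hi₁ | hi₁
    · exact Or.inl ⟨i, hi₁, (orbitChain_of_le hi₁).symm⟩
    rcases le_or_gt i (h + 1 + a + b) with hi₂ | hi₂
    · exact Or.inr (Or.inl ⟨_, by omega, by omega, (orbitChain_of_lt_of_le hi₁ hi₂).symm⟩)
    · refine Or.inr (Or.inr ⟨h + a + b + k + 2 - i, by omega, ?_⟩)
      rw [orbitChain_of_lt hi₂]
      congr 2; omega
  · rintro (⟨i, hi, rfl⟩ | ⟨c, hc₁, hc₂, rfl⟩ | ⟨j, hj, rfl⟩)
    · exact ⟨i, by omega, orbitChain_of_le hi⟩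
    · refine ⟨(c + a).toNat + h + 1, by omega, ?_⟩
      rw [orbitChain_of_lt_of_le (by omega) (by omega)]
      congr 2; omega
    · refine ⟨h + a + b + k + 2 - j, by omega, ?_⟩
      rw [orbitChain_of_lt (by omega)]
      congr 2; omega

lemma injOn_orbitChain (hinj : Injective fun q : Fin 3 × ℤ => (g ^ q.2) (![x, z, y] q.1)) :
    InjOn (orbitChain g x z y h a b k) (Iic (h + a + b + k + 2)) := fun i hi j hj hij =>
  orbitChainCoord_injOn hi hj <| hinj <| by
    simpa only [orbitChain_eq_zpow_coord] using hij

lemma chainSupport_orbitChain_mono {a' b' : ℕ} (ha : a ≤ a') (hb : b ≤ b') :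
    chainSupport (orbitChain g x z y h a b k) (h + a + b + k + 2) ⊆
      chainSupport (orbitChain g x z y h a' b' k) (h + a' + b' + k + 2) := by
  intro p hp
  rw [mem_chainSupport_orbitChain] at hp ⊢
  rcases hp with hx | ⟨c, hc₁, hc₂, hc⟩ | hy
  exacts [Or.inl hx, Or.inr (Or.inl ⟨c, by omega, by omega, hc⟩), Or.inr (Or.inr hy)]

lemma mem_iUnion_chainSupport_orbitChain {K H : ℕ → ℕ} (hK : StrictMono K) (hH : StrictMono H)
    {p : X} :
    p ∈ ⋃ n, chainSupport (orbitChain g x z y h (K n) (H n) k) (h + K n + H n + k + 2) ↔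
      (∃ i : ℕ, i ≤ h ∧ (g ^ (i : ℤ)) x = p) ∨ p ∈ orbitZ g z ∨
      (∃ j : ℕ, j ≤ k ∧ (g ^ (-(j : ℤ))) y = p) := by
  simp only [mem_iUnion, mem_chainSupport_orbitChain]
  constructor
  · rintro ⟨n, hx | ⟨c, -, -, rfl⟩ | hy⟩
    exacts [Or.inl hx, Or.inr (Or.inl ⟨c, rfl⟩), Or.inr (Or.inr hy)]
  · rintro (hx | ⟨c, rfl⟩ | hy)
    · exact ⟨0, Or.inl hx⟩
    · have hKc : c.natAbs ≤ K c.natAbs := hK.le_apply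
      have hHc : c.natAbs ≤ H c.natAbs := hH.le_apply
      exact ⟨c.natAbs, Or.inr (Or.inl ⟨c, by omega, by omega, rfl⟩)⟩
    · exact ⟨0, Or.inr (Or.inr hy)⟩

lemma iUnion_chainSupport_orbitChain_diff
    (hinj : Injective fun q : Fin 3 × ℤ => (g ^ q.2) (![x, z, y] q.1))
    {K H : ℕ → ℕ} (hK : StrictMono K) (hH : StrictMono H) :
    (⋃ n, chainSupport (orbitChain g x z y h (K n) (H n) k) (h + K n + H n + k + 2)) \ {x, y} =
      {p | ∃ i : ℕ, 1 ≤ i ∧ i ≤ h ∧ (g ^ (i : ℤ)) x = p} ∪ orbitZ g z ∪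
        {p | ∃ j : ℕ, 1 ≤ j ∧ j ≤ k ∧ (g ^ (-(j : ℤ))) y = p} := by
  have hne {i j : Fin 3} {m n : ℤ} (hij : (i, m) ≠ (j, n)) :
      (g ^ m) (![x, z, y] i) ≠ (g ^ n) (![x, z, y] j) := fun e => hij (hinj e)
  ext p
  simp only [Set.mem_sdiff, mem_iUnion_chainSupport_orbitChain hK hH, mem_union, mem_insert_iff,
    mem_singleton_iff, mem_ofPred_eq, not_or]
  constructor
  · rintro ⟨⟨i, hi, rfl⟩ | hz | ⟨j, hj, rfl⟩, hpx, hpy⟩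
    · exact Or.inl (Or.inl ⟨i, Nat.one_le_iff_ne_zero.2 (by rintro rfl; simp at hpx), hi, rfl⟩)
    · exact Or.inl (Or.inr hz)
    · exact Or.inr ⟨j, Nat.one_le_iff_ne_zero.2 (by rintro rfl; simp at hpy), hj, rfl⟩
  · rintro ((⟨i, hi₁, hi, rfl⟩ | ⟨c, rfl⟩) | ⟨j, hj₁, hj, rfl⟩)
    · refine ⟨Or.inl ⟨i, hi, rfl⟩, ?_, ?_⟩
      · simpa using hne (i := 0) (j := 0) (m := i) (n := 0) (by simp; omega)
      · simpa using hne (i := 0) (j := 2) (m := i) (n := 0) (by simp)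
    · refine ⟨Or.inr (Or.inl ⟨c, rfl⟩), ?_, ?_⟩
      · simpa using hne (i := 1) (j := 0) (m := c) (n := 0) (by simp)
      · simpa using hne (i := 1) (j := 2) (m := c) (n := 0) (by simp)
    · refine ⟨Or.inr (Or.inr ⟨j, hj, rfl⟩), ?_, ?_⟩
      · simpa using hne (i := 2) (j := 0) (m := -j) (n := 0) (by simp)
      · simpa using hne (i := 2) (j := 2) (m := -j) (n := 0) (by simp; omega)

end OrbitChain

theorem stmt19_general {X : Type*} [MetricSpace X]
    (f : X ≃ₜ X)
    (x y z : X)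
    (hxf : Dense {p | ∃ i : ℕ, (f.toEquiv ^ (i : ℤ)) x = p})
    (hyb : Dense {p | ∃ i : ℕ, 1 ≤ i ∧ (f.toEquiv ^ (-(i : ℤ))) y = p})
    (hxy : orbitZ f.toEquiv x ∩ orbitZ f.toEquiv y = ∅)
    (hzf : Dense {p | ∃ i : ℕ, (f.toEquiv ^ (i : ℤ)) z = p})
    (hzb : Dense {p | ∃ i : ℕ, 1 ≤ i ∧ (f.toEquiv ^ (-(i : ℤ))) z = p})
    (hz : orbitZ f.toEquiv z ∩ (orbitZ f.toEquiv x ∪ orbitZ f.toEquiv y) = ∅)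
    (h k : ℕ) :
    ∃ (kseq hseq : ℕ → ℕ) (C : ℕ → ℕ → X) (m : ℕ → ℕ),
      StrictMono kseq ∧ StrictMono hseq ∧
      (∀ n : ℕ, 1 ≤ n →
        dist ((f.toEquiv ^ ((h : ℤ) + 1)) x) ((f.toEquiv ^ (-(kseq n : ℤ))) z)
          < 1 / (n : ℝ) ∧
        dist ((f.toEquiv ^ ((hseq n : ℤ) + 1)) z) ((f.toEquiv ^ (-(k : ℤ))) y)
          < 1 / (n : ℝ)) ∧
      (∀ n, m n = h + kseq n + hseq n + k + 2) ∧
      (∀ n i, C n i =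
        if i ≤ h then (f.toEquiv ^ (i : ℤ)) x
        else if i ≤ h + 1 + kseq n + hseq n then
          (f.toEquiv ^ ((i : ℤ) - (h : ℤ) - 1 - (kseq n : ℤ))) z
        else (f.toEquiv ^ ((i : ℤ) - (m n : ℤ))) y) ∧
      (∀ n : ℕ, 1 ≤ n → IsEpsChain (⇑f) (1 / (n : ℝ)) (C n) (m n) x y) ∧
      (∀ n, ¬ HasCyclicSubchain (C n) (m n)) ∧
      (∀ n, chainSupport (C n) (m n) ⊆ chainSupport (C (n + 1)) (m (n + 1))) ∧
      ((⋃ n, chainSupport (C n) (m n)) \ {x, y} =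
        {p | ∃ i : ℕ, 1 ≤ i ∧ i ≤ h ∧ (f.toEquiv ^ (i : ℤ)) x = p} ∪
        orbitZ f.toEquiv z ∪
        {p | ∃ j : ℕ, 1 ≤ j ∧ j ≤ k ∧ (f.toEquiv ^ (-(j : ℤ))) y = p}) := by
  set g := f.toEquiv
  have hx : {p | ∃ i : ℕ, (g ^ (i : ℤ)) x = p} ⊆ orbitZ g x := fun _ ⟨i, hi⟩ => ⟨i, hi⟩
  have hy : {p | ∃ i : ℕ, 1 ≤ i ∧ (g ^ (-(i : ℤ))) y = p} ⊆ orbitZ g y :=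
    fun _ ⟨i, _, hi⟩ => ⟨-i, hi⟩
  have hz' : {p | ∃ i : ℕ, (g ^ (i : ℤ)) z = p} ⊆ orbitZ g z := fun _ ⟨i, hi⟩ => ⟨i, hi⟩
  have hxy' := disjoint_iff_inter_eq_empty.2 hxy
  obtain ⟨hzx, hzy⟩ := disjoint_union_right.1 (disjoint_iff_inter_eq_empty.2 hz)
  have : ∀ p : X, (𝓝[≠] p).NeBot := nhdsNE_neBot_of_dense_of_disjoint hxf hyb (hxy'.mono hx hy)
  have hinj :=
    injective_zpow_apply_fin_three (hxf.mono hx) (hzf.mono hz') (hyb.mono hy) hxy' hzx hzy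
  have hzb' : Dense (range fun i : ℕ => (g ^ (-(i : ℤ))) z) :=
    hzb.mono <| by rintro _ ⟨i, -, hi⟩; exact ⟨i, hi⟩
  obtain ⟨K, hK, hKdist⟩ := DenseRange.exists_strictMono_dist_lt hzb' ((g ^ ((h : ℤ) + 1)) x)
  have hzf' : DenseRange fun i : ℕ => (g ^ ((i : ℤ) + 1)) z := by
    convert f.surjective.denseRange.comp hzf f.continuous using 1
    funext i
    exact (Equiv.Perm.apply_zpow_apply g _ z).symm
  obtain ⟨H, hH, hHdist⟩ := hzf'.exists_strictMono_dist_lt ((g ^ (-(k : ℤ))) y)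
  have hxz (n : ℕ) (hn : 1 ≤ n) :
      dist ((g ^ ((h : ℤ) + 1)) x) ((g ^ (-(K n : ℤ))) z) < 1 / (n : ℝ) := by
    rw [dist_comm]; exact hKdist n hn
  exact ⟨K, H, fun n => orbitChain g x z y h (K n) (H n) k,
    fun n => h + K n + H n + k + 2, hK, hH, fun n hn => ⟨hxz n hn, hHdist n hn⟩, fun _ => rfl,
    fun _ _ => rfl, fun n hn => isEpsChain_orbitChain (by positivity) (hxz n hn) (hHdist n hn),
    fun n => not_hasCyclicSubchain_of_injOn (injOn_orbitChain hinj),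
    fun n => chainSupport_orbitChain_mono (hK n.lt_succ_self).le (hH n.lt_succ_self).le,
    iUnion_chainSupport_orbitChain_diff hinj hK hH⟩

/-- Realization of the order type `h + ζ + k` by nested acyclic `1/n`-chains
`x, f(x), …, f^h(x), f^{-k_n}(z), …, z, …, f^{h_n}(z), f^{-k}(y), …, f^{-1}(y), y`. -/
theorem stmt19 {X : Type*} [MetricSpace X] [CompactSpace X]
    (f : X ≃ₜ X)
    (htrans : ∃ p : X, Dense (orbitZ f.toEquiv p))
    (x y z : X)
    (hxf : Dense {p | ∃ i : ℕ, (f.toEquiv ^ (i : ℤ)) x = p})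
    (hyb : Dense {p | ∃ i : ℕ, 1 ≤ i ∧ (f.toEquiv ^ (-(i : ℤ))) y = p})
    (hxy : orbitZ f.toEquiv x ∩ orbitZ f.toEquiv y = ∅)
    (hzf : Dense {p | ∃ i : ℕ, (f.toEquiv ^ (i : ℤ)) z = p})
    (hzb : Dense {p | ∃ i : ℕ, 1 ≤ i ∧ (f.toEquiv ^ (-(i : ℤ))) z = p})
    (hz : orbitZ f.toEquiv z ∩ (orbitZ f.toEquiv x ∪ orbitZ f.toEquiv y) = ∅)
    (h k : ℕ) :
    ∃ (kseq hseq : ℕ → ℕ) (C : ℕ → ℕ → X) (m : ℕ → ℕ),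
      StrictMono kseq ∧ StrictMono hseq ∧
      (∀ n : ℕ, 1 ≤ n →
        dist ((f.toEquiv ^ ((h : ℤ) + 1)) x) ((f.toEquiv ^ (-(kseq n : ℤ))) z)
          < 1 / (n : ℝ) ∧
        dist ((f.toEquiv ^ ((hseq n : ℤ) + 1)) z) ((f.toEquiv ^ (-(k : ℤ))) y)
          < 1 / (n : ℝ)) ∧
      (∀ n, m n = h + kseq n + hseq n + k + 2) ∧
      (∀ n i, C n i =
        if i ≤ h then (f.toEquiv ^ (i : ℤ)) x
        else if i ≤ h + 1 + kseq n + hseq n then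
          (f.toEquiv ^ ((i : ℤ) - (h : ℤ) - 1 - (kseq n : ℤ))) z
        else (f.toEquiv ^ ((i : ℤ) - (m n : ℤ))) y) ∧
      (∀ n : ℕ, 1 ≤ n → IsEpsChain (⇑f) (1 / (n : ℝ)) (C n) (m n) x y) ∧
      (∀ n, ¬ HasCyclicSubchain (C n) (m n)) ∧
      (∀ n, chainSupport (C n) (m n) ⊆ chainSupport (C (n + 1)) (m (n + 1))) ∧
      ((⋃ n, chainSupport (C n) (m n)) \ {x, y} =
        {p | ∃ i : ℕ, 1 ≤ i ∧ i ≤ h ∧ (f.toEquiv ^ (i : ℤ)) x = p} ∪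
        orbitZ f.toEquiv z ∪
        {p | ∃ j : ℕ, 1 ≤ j ∧ j ≤ k ∧ (f.toEquiv ^ (-(j : ℤ))) y = p}) :=
  stmt19_general f x y z hxf hyb hxy hzf hzb hz h k
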